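/- In an affine plane of order q, let 𝓛 be a Kakeya line set and suppose P is a point lying on exactly q+1-k lines of 𝓛. Then the number of points not covered by any line of 𝓛 is at most kq - k(k+1)/2. -/

import Mathlib

/-- An affine plane of order `q`: `q²` points, every line has `q` points, the lines fall
into `q+1` parallel classes each of which partitions the point set (every point lies on a
unique line of each class), and two non-parallel lines meet in exactly one point. -/
structure AffinePlaneOrder (q : ℕ) where
  Point : Type
  Line : Type
  mem : Point → Line → Prop
  pointCount : Nat.card Point = q ^ 2
  lineSize : ∀ l : Line, {p : Point | mem p l}.ncard = q
  parClass : Line → Fin (q + 1)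
  point_class : ∀ (p : Point) (c : Fin (q + 1)), ∃! l : Line, parClass l = c ∧ mem p l
  meet : ∀ l m : Line, parClass l ≠ parClass m → ∃! p : Point, mem p l ∧ mem p m

/-- A Kakeya line set: one line from each parallel class. -/
def IsKakeyaLines {q : ℕ} (A : AffinePlaneOrder q) (L : Fin (q + 1) → A.Line) : Prop :=
  ∀ c, A.parClass (L c) = c

/-- The Kakeya set determined by the lines `L`: all points covered by some line of `L`. -/
def kakeyaSet {q : ℕ} (A : AffinePlaneOrder q) (L : Fin (q + 1) → A.Line) : Set A.Point :=
  {p | ∃ c, A.mem p (L c)}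

/-- The number of lines of `L` through `p`; `p` is a `j`-knot when this equals `j`. -/
noncomputable def knotCount {q : ℕ} (A : AffinePlaneOrder q) (L : Fin (q + 1) → A.Line) (p : A.Point) : ℕ :=
  {c : Fin (q + 1) | A.mem p (L c)}.ncard

/-!
The `q + 1` lines through `P` cover the plane, and an uncovered point lies on such a line whose
class `c` has `P ∉ L c` (otherwise `L c` would be that line); there are `k` such classes, and their
lines through `P` carry `k (q - 1)` points besides `P`. Each Kakeya line `L d` of one of these
classes meets the other `k - 1` of them away from `P`, and two Kakeya lines share at most one
point, so by the Bonferroni inequality at least `k (k - 1) - C(k, 2) = C(k, 2)` of those points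
are covered. This leaves at most `k (q - 1) - C(k, 2) = k q - k (k + 1) / 2` uncovered points.
-/

open Finset

theorem Nat.add_one_choose_two (n : ℕ) : (n + 1).choose 2 = n.choose 2 + n := by
  rw [Nat.choose_succ_succ', Nat.choose_one_right, add_comm]

theorem sum_card_le_card_biUnion_add_choose_two {ι α : Type*} [DecidableEq ι] [DecidableEq α]
    (s : Finset ι) (f : ι → Finset α) (h : ∀ i ∈ s, ∀ j ∈ s, i ≠ j → #(f i ∩ f j) ≤ 1) :
    ∑ i ∈ s, #(f i) ≤ #(s.biUnion f) + (#s).choose 2 := by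
  induction s using Finset.induction_on with
  | empty => simp
  | insert a s ha ih =>
    have ih' := ih fun i hi j hj => h i (mem_insert_of_mem hi) j (mem_insert_of_mem hj)
    have hinter : #(f a ∩ s.biUnion f) ≤ #s :=
      calc #(f a ∩ s.biUnion f) ≤ ∑ j ∈ s, #(f a ∩ f j) := by
            rw [inter_biUnion]; exact card_biUnion_le
        _ ≤ ∑ _j ∈ s, 1 := sum_le_sum fun j hj =>
            h a (mem_insert_self a s) j (mem_insert_of_mem hj) (ne_of_mem_of_not_mem hj ha).symm
        _ = #s := by simp
    have := card_union_add_card_inter (f a) (s.biUnion f)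
    rw [sum_insert ha, biUnion_insert, card_insert_of_notMem ha, Nat.add_one_choose_two]
    omega

namespace AffinePlaneOrder

section

variable {q : ℕ} (A : AffinePlaneOrder q)

theorem eq_of_parClass_eq {l m : A.Line} {p : A.Point} (h : A.parClass l = A.parClass m)
    (hl : A.mem p l) (hm : A.mem p m) : l = m :=
  (A.point_class p (A.parClass m)).unique ⟨h, hl⟩ ⟨rfl, hm⟩

noncomputable def lineThrough (p : A.Point) (c : Fin (q + 1)) : A.Line :=
  (A.point_class p c).exists.choose

@[simp]
theorem parClass_lineThrough (p : A.Point) (c : Fin (q + 1)) :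
    A.parClass (A.lineThrough p c) = c :=
  (A.point_class p c).exists.choose_spec.1

theorem mem_lineThrough (p : A.Point) (c : Fin (q + 1)) : A.mem p (A.lineThrough p c) :=
  (A.point_class p c).exists.choose_spec.2

theorem eq_lineThrough {l : A.Line} {p : A.Point} (hp : A.mem p l) :
    l = A.lineThrough p (A.parClass l) :=
  A.eq_of_parClass_eq (by simp) hp (A.mem_lineThrough p _)

theorem eq_of_mem_lineThrough {P x : A.Point} {c c' : Fin (q + 1)} (hc : c ≠ c')
    (h : A.mem x (A.lineThrough P c)) (h' : A.mem x (A.lineThrough P c')) : x = P :=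
  (A.meet _ _ (by simpa using hc)).unique ⟨h, h'⟩ ⟨A.mem_lineThrough P c, A.mem_lineThrough P c'⟩

section Finite

open scoped Classical

theorem knotCount_add_card_filter_not_mem (L : Fin (q + 1) → A.Line) (P : A.Point) :
    knotCount A L P + #{d | ¬ A.mem P (L d)} = q + 1 := by
  rw [knotCount, ← coe_filter_univ, Set.ncard_coe_finset, card_filter_add_card_filter_not,
    card_univ, Fintype.card_fin]

variable [Fintype A.Point]

noncomputable def lineFinset (l : A.Line) : Finset A.Point := {p | A.mem p l}

@[simp]
theorem mem_lineFinset {l : A.Line} {p : A.Point} : p ∈ A.lineFinset l ↔ A.mem p l := by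
  simp [lineFinset]

theorem card_lineFinset (l : A.Line) : #(A.lineFinset l) = q := by
  simpa [lineFinset, Set.ncard_eq_toFinset_card'] using A.lineSize l

theorem card_lineFinset_inter {l m : A.Line} (h : A.parClass l ≠ A.parClass m) :
    #(A.lineFinset l ∩ A.lineFinset m) = 1 := by
  obtain ⟨p, hp, hu⟩ := A.meet l m h
  exact card_eq_one.mpr ⟨p, by ext x; simpa using ⟨fun hx => hu x hx, fun hx => hx ▸ hp⟩⟩

theorem pairwiseDisjoint_lineFinset_lineThrough_erase (P : A.Point) (s : Finset (Fin (q + 1))) :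
    (s : Set (Fin (q + 1))).PairwiseDisjoint fun c => (A.lineFinset (A.lineThrough P c)).erase P :=
  fun _ _ _ _ hc => disjoint_left.mpr fun _ hx hx' =>
    (ne_of_mem_erase hx) (A.eq_of_mem_lineThrough hc ((A.mem_lineFinset).mp (mem_of_mem_erase hx))
      ((A.mem_lineFinset).mp (mem_of_mem_erase hx')))

theorem exists_mem_lineThrough (P x : A.Point) : ∃ c, A.mem x (A.lineThrough P c) := by
  set W := insert P (univ.biUnion fun c => (A.lineFinset (A.lineThrough P c)).erase P)
  -- The `q + 1` lines through `P` carry `1 + (q + 1)(q - 1) ≥ q²` points, i.e. all of them.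
  have hcard : #W = 1 + (q + 1) * (q - 1) := by
    rw [card_insert_of_notMem (by simp),
      card_biUnion (A.pairwiseDisjoint_lineFinset_lineThrough_erase P univ)]
    simp [card_erase_of_mem, A.mem_lineThrough, card_lineFinset, add_comm]
  have hW : W = univ := by
    refine eq_of_subset_of_card_le (subset_univ W) ?_
    rw [card_univ, ← Nat.card_eq_fintype_card, A.pointCount, hcard]
    rcases q with _ | n
    · simp
    · rw [Nat.add_sub_cancel]; nlinarith
  have hx : x ∈ W := hW ▸ mem_univ x
  rcases mem_insert.mp hx with rfl | hx
  · exact ⟨0, A.mem_lineThrough x 0⟩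
  · obtain ⟨c, -, hc⟩ := mem_biUnion.mp hx
    exact ⟨c, by simpa using mem_of_mem_erase hc⟩

theorem card_uncovered_add_choose_two_le {L : Fin (q + 1) → A.Line} (hL : IsKakeyaLines A L)
    {P : A.Point} (hP : ∃ c, A.mem P (L c)) :
    #{p | ∀ c, ¬ A.mem p (L c)} + (#{d | ¬ A.mem P (L d)}).choose 2 ≤
      #{d | ¬ A.mem P (L d)} * (q - 1) := by
  set S : Finset (Fin (q + 1)) := {d | ¬ A.mem P (L d)}
  set T := S.biUnion fun c => (A.lineFinset (A.lineThrough P c)).erase P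
  set f := fun d => T ∩ A.lineFinset (L d)
  have hT : #T ≤ #S * (q - 1) := card_biUnion_le.trans <| by
    simp [card_erase_of_mem, A.mem_lineThrough, card_lineFinset]
  have hunc : ({p | ∀ c, ¬ A.mem p (L c)} : Finset A.Point) ⊆ T \ S.biUnion f := by
    intro x hx
    simp only [mem_filter, mem_univ, true_and] at hx
    obtain ⟨c, hc⟩ := A.exists_mem_lineThrough P x
    have hcS : c ∈ S := by
      simp only [S, mem_filter, mem_univ, true_and]
      intro hPc
      exact hx c (by rwa [A.eq_lineThrough hPc, hL c])
    have hxP : x ≠ P := by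
      rintro rfl
      obtain ⟨d, hd⟩ := hP
      exact hx d hd
    refine mem_sdiff.mpr ⟨mem_biUnion.mpr ⟨c, hcS, mem_erase.mpr ⟨hxP, by simpa using hc⟩⟩, ?_⟩
    simp [f, hx]
  have hf : ∀ d ∈ S, #S - 1 ≤ #(f d) := by
    intro d hd
    have hPd : P ∉ A.lineFinset (L d) := by simpa [S] using hd
    set g := fun c => (A.lineFinset (A.lineThrough P c)).erase P ∩ A.lineFinset (L d)
    have hg : ∀ c ∈ S.erase d, #(g c) = 1 := by
      intro c hc
      simp only [g]
      rw [erase_inter, erase_eq_of_notMem fun h => hPd (mem_inter.mp h).2]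
      exact A.card_lineFinset_inter (by simpa [hL d] using ne_of_mem_erase hc)
    calc #S - 1 = ∑ c ∈ S.erase d, #(g c) := by
          rw [sum_congr rfl hg, sum_const, smul_eq_mul, mul_one, card_erase_of_mem hd]
      _ ≤ ∑ c ∈ S, #(g c) := sum_le_sum_of_subset (erase_subset d S)
      _ = #(f d) := by
          rw [← card_biUnion ((A.pairwiseDisjoint_lineFinset_lineThrough_erase P S).mono
            fun c => inter_subset_left)]
          simp only [f, T, biUnion_inter]
  have hbonf := sum_card_le_card_biUnion_add_choose_two S f fun d _ d' _ hdd' =>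
    (card_le_card (inter_subset_inter inter_subset_right inter_subset_right)).trans_eq
      (A.card_lineFinset_inter (by rwa [hL, hL]))
  have hsum : #S * (#S - 1) ≤ ∑ d ∈ S, #(f d) := by
    simpa [mul_comm] using card_nsmul_le_sum S (fun d => #(f d)) (#S - 1) hf
  have hfT : S.biUnion f ⊆ T := biUnion_subset.mpr fun _ _ => inter_subset_left
  have hunc' := (card_le_card hunc).trans_eq (card_sdiff_of_subset hfT)
  have := card_le_card hfT
  have hchoose : (#S).choose 2 * 2 = #S * (#S - 1) := by
    rw [Nat.choose_two_right, Nat.div_two_mul_two_of_even (Nat.even_mul_pred_self _)]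
  omega

end Finite

end

theorem ncard_setOf_forall_not_mem_eq_zero (A : AffinePlaneOrder 0) (L : Fin 1 → A.Line) :
    {p | ∀ c, ¬ A.mem p (L c)}.ncard = 0 := by
  rcases Set.eq_empty_or_nonempty {p | ∀ c, ¬ A.mem p (L c)} with h | ⟨p, hp⟩
  · rw [h, Set.ncard_empty]
  -- `Nat.card` vanishes on infinite types, so order `0` only says that every line is empty or
  -- infinite; the line through an uncovered point stays uncovered, so it is infinite.
  have hinf : {x | A.mem x (A.lineThrough p 0)}.Infinite := fun hfin =>
    ((Set.ncard_pos hfin).mpr ⟨p, A.mem_lineThrough p 0⟩).ne' (A.lineSize _)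
  refine (hinf.mono ?_).ncard
  intro x hx c hxc
  exact hp c <|
    A.eq_of_parClass_eq (Subsingleton.elim (α := Fin 1) _ _) hx hxc ▸ A.mem_lineThrough p 0

end AffinePlaneOrder

/-- If some point is a `(q+1-k)`-knot of a Kakeya line set, then at most `kq - k(k+1)/2`
points are not covered by any line of the set. -/
theorem uncovered_upper_bound {q : ℕ} (A : AffinePlaneOrder q) (L : Fin (q + 1) → A.Line)
    (hL : IsKakeyaLines A L) (k : ℕ) (hk : k ≤ q) (P : A.Point)
    (hP : knotCount A L P = q + 1 - k) :
    {p : A.Point | ∀ c, ¬ A.mem p (L c)}.ncard ≤ k * q - k * (k + 1) / 2 := by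
  rcases Nat.eq_zero_or_pos q with rfl | hq
  · exact (A.ncard_setOf_forall_not_mem_eq_zero L).trans_le (Nat.zero_le _)
  have : Finite A.Point := Nat.finite_of_card_ne_zero (by rw [A.pointCount]; positivity)
  cases nonempty_fintype A.Point
  classical
  have hS := A.knotCount_add_card_filter_not_mem L P
  have hPcov : ∃ c, A.mem P (L c) :=
    Set.nonempty_of_ncard_ne_zero (s := {c | A.mem P (L c)}) (by rw [← knotCount]; omega)
  have hcount := A.card_uncovered_add_choose_two_le hL hPcov
  rw [show #{d | ¬ A.mem P (L d)} = k by omega] at hcount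
  have htri : k * (k + 1) / 2 = k.choose 2 + k := by
    rw [← Nat.add_one_choose_two, Nat.choose_two_right, Nat.add_sub_cancel, mul_comm]
  rw [Set.ncard_eq_toFinset_card', Set.toFinset_ofPred, htri]
  have := Nat.mul_sub_one k q
  omega
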